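/- The set identity ( 𝓘_{XY} + (−∞,0] × (−∞,0] × [0,∞) ) ∩ 𝓘ᵒ_{XY} = ( 𝓘_{XY} + { (t,t,t) : t ≤ 0 } ) ∩ ( [0,∞) × [0,∞) × ℝ ) holds, where + denotes the Minkowski sum. -/

import Mathlib

/-!
Three facts about `𝓘 = MIRegion p` carry the proof: `𝓘 ⊆ 𝓘ᵒ` (the Shannon inequalities, all
instances of `I(A;B|C) ≥ 0` and `H(A|B) ≥ 0`); `𝓘` is convex (time sharing); and the
deterministic auxiliaries `U = const, X, Y, (X,Y)` give the points `0`, `(H X, I, H X)`,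
`(I, H Y, H Y)`, `(H X, H Y, H XY)`.

If `v = u + (t,t,t)` with `t ≤ 0`, shrinking `u` towards `0` until its last coordinate is `v_XY`
shows that `v` dominates a point of `𝓘` in the orthant order. Conversely, if `v ≥ u` in that
order and `v ∈ 𝓘ᵒ`, then in the coordinates `(v_XY - v_Y, v_XY - v_X)` the point `v` lies in the
rectangle spanned by `u` and the three nonzero deterministic points, all of which have
`w_X + w_Y - w_XY ≥ v_X + v_Y - v_XY`; convexity gives `w ∈ 𝓘` with the same coordinates, and
then `v - w` is a nonpositive multiple of `(1,1,1)`.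
-/

open scoped BigOperators Pointwise Classical

noncomputable section

namespace GW

/-- A probability mass function on a finite type. -/
def IsPMF {α : Type} [Fintype α] (p : α → ℝ) : Prop :=
  (∀ a, 0 ≤ p a) ∧ ∑ a, p a = 1

/-- Distribution (pmf) of the random variable `f` under the pmf `p`. -/
def dist {α β : Type} [Fintype α] (p : α → ℝ) (f : α → β) : β → ℝ :=
  fun b => ∑ a, if f a = b then p a else 0

/-- Shannon entropy (base 2) of the random variable `f` under the pmf `p`. -/
def H {α β : Type} [Fintype α] [Fintype β] (p : α → ℝ) (f : α → β) : ℝ :=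
  ∑ b, -(dist p f b * Real.logb 2 (dist p f b))

/-- Mutual information `I(f; g)` under `p`. -/
def I2 {α β γ : Type} [Fintype α] [Fintype β] [Fintype γ]
    (p : α → ℝ) (f : α → β) (g : α → γ) : ℝ :=
  H p f + H p g - H p (fun a => (f a, g a))

/-- Conditional entropy `H(f | g)` under `p`. -/
def Hc {α β γ : Type} [Fintype α] [Fintype β] [Fintype γ]
    (p : α → ℝ) (f : α → β) (g : α → γ) : ℝ :=
  H p (fun a => (f a, g a)) - H p g

/-- Conditional mutual information `I(f; g | h)` under `p`. -/
def Ic {α β γ δ : Type} [Fintype α] [Fintype β] [Fintype γ] [Fintype δ]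
    (p : α → ℝ) (f : α → β) (g : α → γ) (h : α → δ) : ℝ :=
  Hc p f h + Hc p g h - Hc p (fun a => (f a, g a)) h

/-- Independence of the random variables `f` and `g` under `p`. -/
def Indep {α β γ : Type} [Fintype α] (p : α → ℝ) (f : α → β) (g : α → γ) : Prop :=
  ∀ b c, dist p (fun a => (f a, g a)) (b, c) = dist p f b * dist p g c

/-- `q` is a joint pmf on `X × Y × U` whose `(X,Y)`-marginal is `p`; i.e. `U` is an
auxiliary random variable defined jointly with `(X,Y)` via a conditional pmf `p_{U|XY}`. -/
def IsAux {X Y U : Type} [Fintype X] [Fintype Y] [Fintype U]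
    (p : X × Y → ℝ) (q : X × Y × U → ℝ) : Prop :=
  IsPMF q ∧ ∀ x y, (∑ u, q (x, y, u)) = p (x, y)

/-- Coordinate map onto `X`. -/
def cX {X Y U : Type} : X × Y × U → X := fun a => a.1
/-- Coordinate map onto `Y`. -/
def cY {X Y U : Type} : X × Y × U → Y := fun a => a.2.1
/-- Coordinate map onto `U`. -/
def cU {X Y U : Type} : X × Y × U → U := fun a => a.2.2
/-- Coordinate map onto `X × Y`. -/
def cXY {X Y U : Type} : X × Y × U → X × Y := fun a => (a.1, a.2.1)

/-- The mutual information region `𝓘_{XY}`. -/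
def MIRegion {X Y : Type} [Fintype X] [Fintype Y] (p : X × Y → ℝ) : Set (ℝ × ℝ × ℝ) :=
  { v | ∃ (U : Type) (_ : Fintype U) (q : X × Y × U → ℝ), IsAux p q ∧
      v = (I2 q cX cU, I2 q cY cU, I2 q cXY cU) }

/-- The outer region `𝓘ᵒ_{XY}`. -/
def OuterRegion {X Y : Type} [Fintype X] [Fintype Y] (p : X × Y → ℝ) : Set (ℝ × ℝ × ℝ) :=
  { v | 0 ≤ v.1 ∧ 0 ≤ v.2.1 ∧ v.1 + v.2.1 - v.2.2 ≤ I2 p Prod.fst Prod.snd ∧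
        0 ≤ v.2.2 - v.2.1 ∧ v.2.2 - v.2.1 ≤ Hc p Prod.fst Prod.snd ∧
        0 ≤ v.2.2 - v.1 ∧ v.2.2 - v.1 ≤ Hc p Prod.snd Prod.fst }

/-- Maximal interaction information `G_NNI(X; Y)`. -/
def GNNI {X Y : Type} [Fintype X] [Fintype Y] (p : X × Y → ℝ) : ℝ :=
  sSup { r | ∃ (U : Type) (_ : Fintype U) (q : X × Y × U → ℝ), IsAux p q ∧
      r = Ic q cX cY cU - I2 p Prod.fst Prod.snd }

/-- Asymmetric private interaction information `G_PNI(X → Y)`. -/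
def GPNI {X Y : Type} [Fintype X] [Fintype Y] (p : X × Y → ℝ) : ℝ :=
  sSup { r | ∃ (U : Type) (_ : Fintype U) (q : X × Y × U → ℝ), IsAux p q ∧
      Indep q cU cX ∧ r = Ic q cX cY cU - I2 p Prod.fst Prod.snd }

/-- Symmetric private interaction information `G_PPI(X; Y)`. -/
def GPPI {X Y : Type} [Fintype X] [Fintype Y] (p : X × Y → ℝ) : ℝ :=
  sSup { r | ∃ (U : Type) (_ : Fintype U) (q : X × Y × U → ℝ), IsAux p q ∧
      Indep q cU cX ∧ Indep q cU cY ∧ r = Ic q cX cY cU - I2 p Prod.fst Prod.snd }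

end GW

theorem Convex.Icc_prod_Icc_subset {s : Set (ℝ × ℝ)} (hs : Convex ℝ s) {a₀ a₁ b₀ b₁ : ℝ}
    (h₀₀ : (a₀, b₀) ∈ s) (h₀₁ : (a₀, b₁) ∈ s) (h₁₀ : (a₁, b₀) ∈ s) (h₁₁ : (a₁, b₁) ∈ s) :
    Set.Icc a₀ a₁ ×ˢ Set.Icc b₀ b₁ ⊆ s :=
  calc Set.Icc a₀ a₁ ×ˢ Set.Icc b₀ b₁ ⊆ Set.uIcc a₀ a₁ ×ˢ Set.uIcc b₀ b₁ :=
        Set.prod_mono Set.Icc_subset_uIcc Set.Icc_subset_uIcc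
    _ = convexHull ℝ ({a₀, a₁} ×ˢ {b₀, b₁}) := by
        rw [convexHull_prod, convexHull_pair, convexHull_pair, segment_eq_uIcc, segment_eq_uIcc]
    _ ⊆ s := convexHull_min
        (by simp [Set.insert_prod, Set.singleton_prod, Set.insert_subset_iff, *]) hs

namespace GW

section Distribution

variable {α β γ : Type} [Fintype α]

theorem dist_nonneg {p : α → ℝ} (hp : ∀ a, 0 ≤ p a) (f : α → β) (b : β) : 0 ≤ dist p f b :=
  Finset.sum_nonneg fun a _ => by split_ifs <;> simp [hp a]

theorem sum_dist_mul [Fintype β] (p : α → ℝ) (f : α → β) (φ : β → ℝ) :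
    ∑ b, dist p f b * φ b = ∑ a, p a * φ (f a) := by
  simp only [dist, Finset.sum_mul, ite_mul, zero_mul]
  rw [Finset.sum_comm]
  simp

theorem sum_dist [Fintype β] (p : α → ℝ) (f : α → β) : ∑ b, dist p f b = ∑ a, p a := by
  simpa using sum_dist_mul p f 1

theorem IsPMF.dist [Fintype β] {p : α → ℝ} (hp : IsPMF p) (f : α → β) : IsPMF (dist p f) :=
  ⟨dist_nonneg hp.1 f, (sum_dist p f).trans hp.2⟩

theorem dist_comp [Fintype β] (p : α → ℝ) (f : α → β) (g : β → γ) :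
    dist p (fun a => g (f a)) = dist (dist p f) g := by
  ext c
  have h := sum_dist_mul p f fun b => if g b = c then 1 else 0
  simp only [mul_ite, mul_one, mul_zero] at h
  exact h.symm

theorem dist_id (p : α → ℝ) : dist p (fun a => a) = p := by
  ext a
  simp [dist]

theorem dist_mul_add_mul (s t : ℝ) (p r : α → ℝ) (f : α → β) :
    dist (fun a => s * p a + t * r a) f = fun b => s * dist p f b + t * dist r f b := by
  ext b
  simp only [dist, Finset.mul_sum, ← Finset.sum_add_distrib]
  exact Finset.sum_congr rfl fun a _ => by split_ifs <;> ring

theorem dist_eq_zero_of_forall_ne (p : α → ℝ) {f : α → β} {b : β} (h : ∀ a, f a ≠ b) :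
    dist p f b = 0 :=
  Finset.sum_eq_zero fun a _ => if_neg (h a)

theorem sum_dist_pair [Fintype β] [Fintype γ] (p : α → ℝ) (f : α → β) (g : α → γ) (c : γ) :
    ∑ b, dist p (fun a => (f a, g a)) (b, c) = dist p g c := by
  rw [dist_comp p (fun a => (f a, g a)) Prod.snd]
  simp [dist, Fintype.sum_prod_type]

theorem le_dist_apply {p : α → ℝ} (hp : ∀ a, 0 ≤ p a) (f : α → β) (a : α) :
    p a ≤ dist p f (f a) := by
  unfold dist
  simpa using Finset.single_le_sum (f := fun a' => if f a' = f a then p a' else 0)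
    (fun a' _ => by split_ifs <;> simp [hp a']) (Finset.mem_univ a)

theorem dist_apply_le_of_factors {p : α → ℝ} (hp : ∀ a, 0 ≤ p a) {f : α → β} {g : α → γ}
    (hfg : ∀ a a', f a = f a' → g a = g a') (a : α) : dist p f (f a) ≤ dist p g (g a) :=
  Finset.sum_le_sum fun a' _ => by
    split_ifs with h₁ h₂ <;> first | exact le_rfl | exact hp a' | exact absurd (hfg _ _ h₁) h₂

theorem dist_apply_congr_of_fibers (p : α → ℝ) {f : α → β} {g : α → γ}
    (hfg : ∀ a a', f a = f a' ↔ g a = g a') (a : α) : dist p f (f a) = dist p g (g a) := by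
  simp only [dist, hfg]

end Distribution

section Entropy

variable {α β γ : Type} [Fintype α] [Fintype β]

open Real

theorem H_eq_sum (p : α → ℝ) (f : α → β) :
    H p f = ∑ a, p a * -logb 2 (dist p f (f a)) := by
  rw [H, ← sum_dist_mul p f fun b => -logb 2 (dist p f b)]
  simp

theorem H_eq_sum_negMulLog (p : α → ℝ) (f : α → β) :
    H p f = (∑ b, negMulLog (dist p f b)) / log 2 := by
  simp only [H, negMulLog, logb, Finset.sum_div]
  exact Finset.sum_congr rfl fun b _ => by ring

theorem H_dist [Fintype γ] (p : α → ℝ) (e : α → β) (f : β → γ) :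
    H (dist p e) f = H p (fun a => f (e a)) := by
  simp only [H, dist_comp]

theorem H_congr_of_fibers [Fintype γ] (p : α → ℝ) {f : α → β} {g : α → γ}
    (hfg : ∀ a a', f a = f a' ↔ g a = g a') : H p f = H p g := by
  simp only [H_eq_sum, dist_apply_congr_of_fibers p hfg]

theorem H_le_of_factors [Fintype γ] {p : α → ℝ} (hp : ∀ a, 0 ≤ p a) {f : α → β} {g : α → γ}
    (hfg : ∀ a a', f a = f a' → g a = g a') : H p g ≤ H p f := by
  rw [H_eq_sum, H_eq_sum]
  refine Finset.sum_le_sum fun a _ => ?_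
  rcases (hp a).eq_or_lt with h | h
  · simp [← h]
  · have hf := h.trans_le (le_dist_apply hp f a)
    exact mul_le_mul_of_nonneg_left
      (neg_le_neg (logb_le_logb_of_le one_lt_two hf (dist_apply_le_of_factors hp hfg a))) h.le

theorem H_const {p : α → ℝ} (hp : IsPMF p) (c : β) : H p (fun _ => c) = 0 := by
  simp [H_eq_sum, dist, hp.2]

theorem I2_comm [Fintype γ] (p : α → ℝ) (f : α → β) (g : α → γ) : I2 p f g = I2 p g f := by
  have h : H p (fun a => (f a, g a)) = H p (fun a => (g a, f a)) :=
    H_congr_of_fibers p fun a b => by simp only [Prod.ext_iff]; tauto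
  rw [I2, I2, h]
  ring

theorem I2_eq_left_of_factors [Fintype γ] (p : α → ℝ) {f : α → β} {g : α → γ}
    (hfg : ∀ a b, g a = g b → f a = f b) : I2 p f g = H p f := by
  have h : H p (fun a => (f a, g a)) = H p g :=
    H_congr_of_fibers p fun a b => by simpa [Prod.ext_iff] using hfg a b
  rw [I2, h]
  ring

theorem I2_eq_right_of_factors [Fintype γ] (p : α → ℝ) {f : α → β} {g : α → γ}
    (hfg : ∀ a b, f a = f b → g a = g b) : I2 p f g = H p g := by
  rw [I2_comm, I2_eq_left_of_factors p hfg]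

end Entropy

section Shannon

variable {α β γ δ : Type} [Fintype α]

open Real

theorem sum_mul_logb_nonpos {p ρ : α → ℝ} (hp : ∀ a, 0 ≤ p a) (hρ : ∀ a, 0 < p a → 0 < ρ a)
    (hsum : ∑ a, p a * ρ a ≤ ∑ a, p a) : ∑ a, p a * logb 2 (ρ a) ≤ 0 := by
  have term : ∀ a, p a * logb 2 (ρ a) ≤ (p a * ρ a - p a) / log 2 := fun a => by
    rw [logb, ← mul_div_assoc]
    refine div_le_div_of_nonneg_right ?_ (log_pos one_lt_two).le
    rcases (hp a).eq_or_lt with h | h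
    · simp [← h]
    · nlinarith [log_le_sub_one_of_pos (hρ a h)]
  calc ∑ a, p a * logb 2 (ρ a) ≤ ∑ a, (p a * ρ a - p a) / log 2 :=
        Finset.sum_le_sum fun a _ => term a
    _ = (∑ a, p a * ρ a - ∑ a, p a) / log 2 := by rw [← Finset.sum_div, Finset.sum_sub_distrib]
    _ ≤ 0 := div_nonpos_of_nonpos_of_nonneg (by linarith) (log_pos one_lt_two).le

theorem sum_mul_div_dist_le [Fintype β] {p : α → ℝ} (hp : ∀ a, 0 ≤ p a) (f : α → β)
    {N : β → ℝ} (hN : ∀ b, 0 ≤ N b) : ∑ a, p a * (N (f a) / dist p f (f a)) ≤ ∑ b, N b := by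
  rw [← sum_dist_mul p f fun b => N b / dist p f b]
  refine Finset.sum_le_sum fun b _ => ?_
  rcases (dist_nonneg hp f b).eq_or_lt with h | h
  · simp [← h, hN b]
  · rw [mul_div_cancel₀ _ h.ne']

theorem sum_mul_div_eq_of_marginals [Fintype β] [Fintype γ] [Fintype δ] {r : β × δ → ℝ}
    {s : γ × δ → ℝ} {m : δ → ℝ} (hr : ∀ d, ∑ b, r (b, d) = m d) (hs : ∀ d, ∑ c, s (c, d) = m d) :
    ∑ x : (β × γ) × δ, r (x.1.1, x.2) * s (x.1.2, x.2) / m x.2 = ∑ d, m d := by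
  rw [Fintype.sum_prod_type_right]
  refine Finset.sum_congr rfl fun d _ => ?_
  simp only [Fintype.sum_prod_type, ← Finset.sum_div, ← Finset.sum_mul_sum, hr, hs,
    mul_self_div_self]

theorem Ic_nonneg [Fintype β] [Fintype γ] [Fintype δ] {p : α → ℝ} (hp : IsPMF p)
    (f : α → β) (g : α → γ) (h : α → δ) : 0 ≤ Ic p f g h := by
  set k : α → (β × γ) × δ := fun a => ((f a, g a), h a)
  set Pfh := dist p fun a => (f a, h a)
  set Pgh := dist p fun a => (g a, h a)
  set N : (β × γ) × δ → ℝ := fun x => Pfh (x.1.1, x.2) * Pgh (x.1.2, x.2) / dist p h x.2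
  have hN : ∀ x, 0 ≤ N x := fun x =>
    div_nonneg (mul_nonneg (dist_nonneg hp.1 _ _) (dist_nonneg hp.1 _ _)) (dist_nonneg hp.1 _ _)
  set ρ : α → ℝ := fun a => N (k a) / dist p k (k a)
  have hsum : ∑ a, p a * ρ a ≤ ∑ a, p a := calc
    ∑ a, p a * ρ a ≤ ∑ x, N x := sum_mul_div_dist_le hp.1 k hN
    _ = ∑ d, dist p h d :=
      sum_mul_div_eq_of_marginals (sum_dist_pair p f h) (sum_dist_pair p g h)
    _ = ∑ a, p a := sum_dist p h
  have hlog : ∀ a, p a * logb 2 (ρ a) = p a * (logb 2 (Pfh (f a, h a)) + logb 2 (Pgh (g a, h a))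
      - logb 2 (dist p h (h a)) - logb 2 (dist p k (k a))) := fun a => by
    rcases (hp.1 a).eq_or_lt with ha | ha
    · simp [← ha]
    have pos : ∀ {ε : Type} (e : α → ε), dist p e (e a) ≠ 0 :=
      fun e => (ha.trans_le (le_dist_apply hp.1 e a)).ne'
    have hfh := pos fun a => (f a, h a)
    have hgh := pos fun a => (g a, h a)
    rw [show ρ a = Pfh (f a, h a) * Pgh (g a, h a) / dist p h (h a) / dist p k (k a) from rfl,
      logb_div (div_ne_zero (mul_ne_zero hfh hgh) (pos h)) (pos k),
      logb_div (mul_ne_zero hfh hgh) (pos h), logb_mul hfh hgh]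
  have gibbs := sum_mul_logb_nonpos hp.1 (fun a ha => div_pos (div_pos (mul_pos
    (ha.trans_le (le_dist_apply hp.1 _ a)) (ha.trans_le (le_dist_apply hp.1 _ a)))
    (ha.trans_le (le_dist_apply hp.1 h a))) (ha.trans_le (le_dist_apply hp.1 k a))) hsum
  rw [Finset.sum_congr rfl fun a _ => hlog a] at gibbs
  simp only [mul_sub, mul_add, Finset.sum_sub_distrib, Finset.sum_add_distrib] at gibbs
  simp only [Ic, Hc, H_eq_sum, mul_neg, Finset.sum_neg_distrib]
  linarith

theorem I2_nonneg [Fintype β] [Fintype γ] {p : α → ℝ} (hp : IsPMF p) (f : α → β) (g : α → γ) :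
    0 ≤ I2 p f g := by
  have h := Ic_nonneg hp f g fun _ => ()
  simp only [Ic, Hc, H_const hp] at h
  have hf : H p (fun a => (f a, ())) = H p f := H_congr_of_fibers p (by simp)
  have hg : H p (fun a => (g a, ())) = H p g := H_congr_of_fibers p (by simp)
  have hfg : H p (fun a => ((f a, g a), ())) = H p (fun a => (f a, g a)) :=
    H_congr_of_fibers p (by simp)
  rw [I2]
  linarith

end Shannon

section Auxiliary

variable {X Y U : Type} [Fintype X] [Fintype Y] [Fintype U] {p : X × Y → ℝ} {q : X × Y × U → ℝ}

theorem dist_cXY_apply (q : X × Y × U → ℝ) (x : X) (y : Y) :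
    dist q cXY (x, y) = ∑ u, q (x, y, u) := by
  simp only [dist, cXY, Fintype.sum_prod_type, Prod.mk.injEq, ite_and]
  simp [Finset.sum_ite_eq', Finset.sum_comm (γ := Y)]

theorem isAux_iff : IsAux p q ↔ IsPMF q ∧ dist q cXY = p := by
  simp only [IsAux, funext_iff, Prod.forall, dist_cXY_apply]

theorem IsAux.H_comp_cXY {β : Type} [Fintype β] (hq : IsAux p q) (F : X × Y → β) :
    H q (fun a => F (cXY a)) = H p F := by
  rw [← H_dist, (isAux_iff.mp hq).2]

theorem IsAux.mem_outerRegion (hq : IsAux p q) :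
    (I2 q cX cU, I2 q cY cU, I2 q cXY cU) ∈ OuterRegion p := by
  have hpmf := hq.1
  have hX : H q cX = H p Prod.fst := hq.H_comp_cXY Prod.fst
  have hY : H q cY = H p Prod.snd := hq.H_comp_cXY Prod.snd
  have hXY : H q cXY = H p (fun z => (z.1, z.2)) := hq.H_comp_cXY fun z => (z.1, z.2)
  have hYX : H q cXY = H p (fun z => (z.2, z.1)) := by
    rw [← hq.H_comp_cXY]
    exact H_congr_of_fibers q fun a b => by simp only [cXY, Prod.ext_iff]; tauto
  have hUY : H q (fun a => (cU a, cY a)) = H q (fun a => (cY a, cU a)) :=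
    H_congr_of_fibers q fun a b => by simp only [Prod.ext_iff]; tauto
  have hUX : H q (fun a => (cU a, cX a)) = H q (fun a => (cX a, cU a)) :=
    H_congr_of_fibers q fun a b => by simp only [Prod.ext_iff]; tauto
  have hYXq : H q (fun a => (cY a, cX a)) = H q cXY :=
    H_congr_of_fibers q fun a b => by simp only [cXY, Prod.ext_iff]; tauto
  have hXUY : H q (fun a => ((cX a, cU a), cY a)) = H q (fun a => (cXY a, cU a)) :=
    H_congr_of_fibers q fun a b => by simp only [cXY, Prod.ext_iff]; tauto
  have hYUX : H q (fun a => ((cY a, cU a), cX a)) = H q (fun a => (cXY a, cU a)) :=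
    H_congr_of_fibers q fun a b => by simp only [cXY, Prod.ext_iff]; tauto
  have hXY_def : H q (fun a => (cX a, cY a)) = H q cXY := rfl
  have hXYU_def : H q (fun a => ((cX a, cY a), cU a)) = H q (fun a => (cXY a, cU a)) := rfl
  have hXYU := Ic_nonneg hpmf cX cY cU
  have hXUY' := Ic_nonneg hpmf cX cU cY
  have hYUX' := Ic_nonneg hpmf cY cU cX
  have hYU_le : H q (fun a => (cY a, cU a)) ≤ H q (fun a => (cXY a, cU a)) :=
    H_le_of_factors hpmf.1 fun a b => by simp only [cXY, Prod.ext_iff]; tauto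
  have hXU_le : H q (fun a => (cX a, cU a)) ≤ H q (fun a => (cXY a, cU a)) :=
    H_le_of_factors hpmf.1 fun a b => by simp only [cXY, Prod.ext_iff]; tauto
  simp only [Ic, Hc] at hXYU hXUY' hYUX'
  refine ⟨I2_nonneg hpmf _ _, I2_nonneg hpmf _ _, ?_, ?_, ?_, ?_, ?_⟩ <;>
    simp only [I2, Hc] at * <;> linarith

end Auxiliary

section Points

variable {X Y U : Type} [Fintype X] [Fintype Y] [Fintype U] {p : X × Y → ℝ}

theorem isAux_dist_graph (hp : IsPMF p) (k : X × Y → U) :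
    IsAux p (dist p fun z => (z.1, z.2, k z)) :=
  isAux_iff.mpr ⟨hp.dist _, (dist_comp p (fun z => (z.1, z.2, k z)) cXY).symm.trans (dist_id p)⟩

theorem mem_MIRegion_of_deterministic (hp : IsPMF p) (k : X × Y → U) :
    (I2 p Prod.fst k, I2 p Prod.snd k, I2 p (fun z => z) k) ∈ MIRegion p :=
  ⟨U, inferInstance, _, isAux_dist_graph hp k, by simp only [I2, H_dist]; rfl⟩

theorem zero_mem_MIRegion (hp : IsPMF p) : (0 : ℝ × ℝ × ℝ) ∈ MIRegion p := by
  have h := mem_MIRegion_of_deterministic hp fun _ => ()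
  simp only [I2_eq_right_of_factors p (g := fun _ : X × Y => ()) fun _ _ _ => rfl,
    H_const hp] at h
  exact h

theorem fst_mem_MIRegion (hp : IsPMF p) :
    (H p Prod.fst, I2 p Prod.fst Prod.snd, H p Prod.fst) ∈ MIRegion p := by
  have h := mem_MIRegion_of_deterministic hp Prod.fst
  rwa [I2_eq_left_of_factors p fun _ _ h => h, I2_comm p Prod.snd,
    I2_eq_right_of_factors p (f := fun z => z) fun _ _ h => congrArg Prod.fst h] at h

theorem snd_mem_MIRegion (hp : IsPMF p) :
    (I2 p Prod.fst Prod.snd, H p Prod.snd, H p Prod.snd) ∈ MIRegion p := by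
  have h := mem_MIRegion_of_deterministic hp Prod.snd
  rwa [I2_eq_left_of_factors p (f := Prod.snd) fun _ _ h => h,
    I2_eq_right_of_factors p (f := fun z => z) fun _ _ h => congrArg Prod.snd h] at h

theorem joint_mem_MIRegion (hp : IsPMF p) :
    (H p Prod.fst, H p Prod.snd, H p (fun z => (z.1, z.2))) ∈ MIRegion p := by
  have h := mem_MIRegion_of_deterministic hp fun z => z
  rwa [I2_eq_left_of_factors p fun _ _ h => congrArg Prod.fst h,
    I2_eq_left_of_factors p fun _ _ h => congrArg Prod.snd h,
    I2_eq_left_of_factors p fun _ _ h => h] at h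

end Points

section TimeSharing

open Real

theorem H_mix_of_disjoint {α β : Type} [Fintype α] [Fintype β] (t : ℝ) {r₁ r₂ : α → ℝ}
    (h₁ : ∑ a, r₁ a = 1) (h₂ : ∑ a, r₂ a = 1) (f : α → β)
    (hdisj : ∀ b, dist r₁ f b = 0 ∨ dist r₂ f b = 0) :
    H (fun a => t * r₁ a + (1 - t) * r₂ a) f
      = t * H r₁ f + (1 - t) * H r₂ f + (negMulLog t + negMulLog (1 - t)) / log 2 := by
  have term : ∀ b, negMulLog (t * dist r₁ f b + (1 - t) * dist r₂ f b)
      = t * negMulLog (dist r₁ f b) + dist r₁ f b * negMulLog t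
        + ((1 - t) * negMulLog (dist r₂ f b) + dist r₂ f b * negMulLog (1 - t)) := fun b => by
    rcases hdisj b with h | h <;> simp [h, negMulLog_mul] <;> ring
  simp only [H_eq_sum_negMulLog, dist_mul_add_mul, term, Finset.sum_add_distrib,
    ← Finset.mul_sum, ← Finset.sum_mul, sum_dist, h₁, h₂]
  ring

variable {X Y U₁ U₂ : Type} [Fintype X] [Fintype Y] [Fintype U₁] [Fintype U₂]
  {p : X × Y → ℝ} {q₁ : X × Y × U₁ → ℝ} {q₂ : X × Y × U₂ → ℝ}

/-- Time sharing: `U` is drawn from `q₁` with probability `t` and from `q₂` otherwise, tagged by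
the summand it comes from so that the mixing index is a function of `U`. -/
def timeShare (t : ℝ) (q₁ : X × Y × U₁ → ℝ) (q₂ : X × Y × U₂ → ℝ) : X × Y × (U₁ ⊕ U₂) → ℝ :=
  fun a => t * dist q₁ (Prod.map id (Prod.map id Sum.inl)) a
    + (1 - t) * dist q₂ (Prod.map id (Prod.map id Sum.inr)) a

theorem isAux_timeShare {t : ℝ} (ht : t ∈ Set.Icc (0 : ℝ) 1) (h₁ : IsAux p q₁)
    (h₂ : IsAux p q₂) : IsAux p (timeShare t q₁ q₂) := by
  obtain ⟨⟨h₁nn, h₁sum⟩, h₁m⟩ := isAux_iff.mp h₁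
  obtain ⟨⟨h₂nn, h₂sum⟩, h₂m⟩ := isAux_iff.mp h₂
  refine isAux_iff.mpr ⟨⟨fun a => ?_, ?_⟩, ?_⟩
  · exact add_nonneg (mul_nonneg ht.1 (dist_nonneg h₁nn _ _))
      (mul_nonneg (sub_nonneg.mpr ht.2) (dist_nonneg h₂nn _ _))
  · simp only [timeShare, Finset.sum_add_distrib, ← Finset.mul_sum, sum_dist, h₁sum, h₂sum]
    ring
  · unfold timeShare
    rw [dist_mul_add_mul, ← dist_comp, ← dist_comp]
    change (fun b => t * dist q₁ cXY b + (1 - t) * dist q₂ cXY b) = p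
    rw [h₁m, h₂m]
    ext b
    ring

theorem H_timeShare {ω : Type} [Fintype ω] (t : ℝ) (h₁ : IsPMF q₁) (h₂ : IsPMF q₂)
    (G : X × Y × (U₁ ⊕ U₂) → ω)
    (hG : ∀ (a₁ : X × Y × U₁) (a₂ : X × Y × U₂),
      G (a₁.1, a₁.2.1, .inl a₁.2.2) ≠ G (a₂.1, a₂.2.1, .inr a₂.2.2)) :
    H (timeShare t q₁ q₂) G = t * H q₁ (fun a => G (a.1, a.2.1, .inl a.2.2))
      + (1 - t) * H q₂ (fun a => G (a.1, a.2.1, .inr a.2.2))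
      + (negMulLog t + negMulLog (1 - t)) / log 2 := by
  unfold timeShare
  rw [H_mix_of_disjoint t ((sum_dist _ _).trans h₁.2) ((sum_dist _ _).trans h₂.2),
    H_dist, H_dist]
  · rfl
  intro w
  rw [← dist_comp, ← dist_comp]
  by_cases hw : ∃ a₁ : X × Y × U₁, G (a₁.1, a₁.2.1, .inl a₁.2.2) = w
  · obtain ⟨a₁, rfl⟩ := hw
    exact .inr (dist_eq_zero_of_forall_ne _ fun a₂ h => hG a₁ a₂ h.symm)
  · exact .inl (dist_eq_zero_of_forall_ne _ fun a₁ h => hw ⟨a₁, h⟩)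

theorem I2_timeShare {β : Type} [Fintype β] {t : ℝ} (ht : t ∈ Set.Icc (0 : ℝ) 1)
    (h₁ : IsAux p q₁) (h₂ : IsAux p q₂) (F : X × Y → β) :
    I2 (timeShare t q₁ q₂) (fun a => F (cXY a)) cU
      = t * I2 q₁ (fun a => F (cXY a)) cU + (1 - t) * I2 q₂ (fun a => F (cXY a)) cU := by
  have hF := (isAux_timeShare ht h₁ h₂).H_comp_cXY F
  have hF₁ := h₁.H_comp_cXY F
  have hF₂ := h₂.H_comp_cXY F
  have hU := H_timeShare t h₁.1 h₂.1 cU fun _ _ => Sum.inl_ne_inr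
  have hFU := H_timeShare t h₁.1 h₂.1 (fun a => (F (cXY a), cU a))
    fun _ _ h => Sum.inl_ne_inr (congrArg Prod.snd h)
  have relabel : ∀ {V : Type} [Fintype V] (q : X × Y × V → ℝ) (ι : V → U₁ ⊕ U₂),
      ι.Injective → H q (fun a => cU (a.1, a.2.1, ι a.2.2)) = H q cU ∧
        H q (fun a => (F (cXY (a.1, a.2.1, ι a.2.2)), cU (a.1, a.2.1, ι a.2.2)))
          = H q (fun a => (F (cXY a), cU a)) :=
    fun q ι hι => ⟨H_congr_of_fibers q fun _ _ => hι.eq_iff,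
      H_congr_of_fibers q fun _ _ => by simp [hι.eq_iff, cU, cXY]⟩
  obtain ⟨hU₁, hFU₁⟩ := relabel q₁ Sum.inl Sum.inl_injective
  obtain ⟨hU₂, hFU₂⟩ := relabel q₂ Sum.inr Sum.inr_injective
  simp only [I2]
  simp only [hU₁, hU₂, hFU₁, hFU₂] at hU hFU
  rw [hF, hF₁, hF₂, hU, hFU]
  ring

theorem convex_MIRegion (p : X × Y → ℝ) : Convex ℝ (MIRegion p) := by
  rintro _ ⟨U₁, _, q₁, h₁, rfl⟩ _ ⟨U₂, _, q₂, h₂, rfl⟩ t s ht hs hts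
  obtain rfl : s = 1 - t := by linarith
  have ht' : t ∈ Set.Icc (0 : ℝ) 1 := ⟨ht, by linarith⟩
  refine ⟨U₁ ⊕ U₂, inferInstance, timeShare t q₁ q₂, isAux_timeShare ht' h₁ h₂, ?_⟩
  simp only [Prod.smul_mk, Prod.mk_add_mk, smul_eq_mul]
  exact Prod.ext (I2_timeShare ht' h₁ h₂ Prod.fst).symm
    (Prod.ext (I2_timeShare ht' h₁ h₂ Prod.snd).symm (I2_timeShare ht' h₁ h₂ fun z => z).symm)

end TimeSharing

section Regions

variable {X Y : Type} [Fintype X] [Fintype Y] {p : X × Y → ℝ}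

theorem MIRegion_subset_outerRegion : MIRegion p ⊆ OuterRegion p := by
  rintro _ ⟨U, _, q, hq, rfl⟩
  exact hq.mem_outerRegion

theorem MIRegion_add_diagonal_inter_subset_outerRegion :
    (MIRegion p + { w : ℝ × ℝ × ℝ | ∃ t ≤ (0:ℝ), w = (t, t, t) }) ∩
      (Set.Ici (0:ℝ) ×ˢ Set.Ici (0:ℝ) ×ˢ (Set.univ : Set ℝ)) ⊆ OuterRegion p := by
  rintro _ ⟨⟨⟨u₁, u₂, u₃⟩, hu, _, ⟨t, ht, rfl⟩, rfl⟩, hv₁, hv₂, -⟩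
  obtain ⟨-, -, hI, hA₀, hA, hB₀, hB⟩ := MIRegion_subset_outerRegion hu
  simp only [Prod.mk_add_mk] at hv₁ hv₂ ⊢
  refine ⟨hv₁, hv₂, ?_, ?_, ?_, ?_, ?_⟩ <;> dsimp only <;> linarith

theorem MIRegion_add_diagonal_inter_subset_add_orthant (hp : IsPMF p) :
    (MIRegion p + { w : ℝ × ℝ × ℝ | ∃ t ≤ (0:ℝ), w = (t, t, t) }) ∩
      (Set.Ici (0:ℝ) ×ˢ Set.Ici (0:ℝ) ×ˢ (Set.univ : Set ℝ)) ⊆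
        MIRegion p + Set.Iic (0:ℝ) ×ˢ Set.Iic (0:ℝ) ×ˢ Set.Ici (0:ℝ) := by
  rintro _ ⟨⟨⟨u₁, u₂, u₃⟩, hu, _, ⟨t, ht, rfl⟩, rfl⟩, hv₁, hv₂, -⟩
  obtain ⟨hu₁, -, -, hA₀, -, hB₀, -⟩ := MIRegion_subset_outerRegion hu
  simp only [Set.mem_Ici, Prod.mk_add_mk] at hu₁ hA₀ hB₀ hv₁ hv₂
  set l := (u₃ + t) / u₃
  have hlu : l * u₃ = u₃ + t := div_mul_cancel_of_imp fun h => by linarith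
  have hl : l ∈ Set.Icc (0 : ℝ) 1 :=
    ⟨div_nonneg (by linarith) (by linarith), div_le_one_of_le₀ (by linarith) (by linarith)⟩
  refine ⟨l • (u₁, u₂, u₃), (convex_MIRegion p).smul_mem_of_zero_mem (zero_mem_MIRegion hp) hu hl,
    (u₁ + t - l * u₁, u₂ + t - l * u₂, 0), ⟨?_, ?_, Set.self_mem_Ici⟩, ?_⟩
  · simp only [Set.mem_Iic]; nlinarith [hl.2]
  · simp only [Set.mem_Iic]; nlinarith [hl.2]
  · simp only [Prod.smul_mk, smul_eq_mul, Prod.mk_add_mk]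
    ext <;> simp only <;> linarith

end Regions

section Inclusion

variable {X Y : Type} [Fintype X] [Fintype Y] {p : X × Y → ℝ}

/-- At a point of `MIRegion p` these are `(I(X;U|Y), I(Y;U|X))`. -/
def condMI (v : ℝ × ℝ × ℝ) : ℝ × ℝ := (v.2.2 - v.2.1, v.2.2 - v.1)

theorem isLinearMap_condMI : IsLinearMap ℝ condMI :=
  ⟨fun x y => by ext <;> simp only [condMI, Prod.fst_add, Prod.snd_add] <;> ring,
    fun r x => by ext <;> simp only [condMI, Prod.smul_fst, Prod.smul_snd, smul_eq_mul] <;> ring⟩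

theorem convex_MIRegion_inter_le (p : X × Y → ℝ) (c : ℝ) :
    Convex ℝ (MIRegion p ∩ {w | c ≤ w.1 + w.2.1 - w.2.2}) :=
  (convex_MIRegion p).inter (convex_halfSpace_ge
    ⟨fun x y => by simp only [Prod.fst_add, Prod.snd_add]; ring,
      fun r x => by simp only [Prod.smul_fst, Prod.smul_snd, smul_eq_mul]; ring⟩ c)

theorem Icc_prod_Icc_subset_image_condMI (hp : IsPMF p) {c : ℝ}
    (hc : c ≤ I2 p Prod.fst Prod.snd) {u : ℝ × ℝ × ℝ} (hu : u ∈ MIRegion p)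
    (hcu : c ≤ u.1 + u.2.1 - u.2.2) :
    Set.Icc (condMI u).1 (Hc p Prod.fst Prod.snd) ×ˢ Set.Icc (condMI u).2 (Hc p Prod.snd Prod.fst)
      ⊆ condMI '' (MIRegion p ∩ {w | c ≤ w.1 + w.2.1 - w.2.2}) := by
  have hS := (convex_MIRegion_inter_le p c).is_linear_image isLinearMap_condMI
  have corner : ∀ w ∈ MIRegion p, c ≤ w.1 + w.2.1 - w.2.2 → ∀ a b, condMI w = (a, b) →
      (a, b) ∈ condMI '' (MIRegion p ∩ {w | c ≤ w.1 + w.2.1 - w.2.2}) :=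
    fun w hw hcw _ _ h => ⟨w, ⟨hw, hcw⟩, h⟩
  have hYX : H p (fun z => (z.2, z.1)) = H p (fun z => (z.1, z.2)) :=
    H_congr_of_fibers p fun a b => by simp only [Prod.ext_iff]; tauto
  obtain ⟨-, -, -, huA₀, huA, huB₀, huB⟩ := MIRegion_subset_outerRegion hu
  simp only [I2] at hc
  have h₀₀ := corner u hu hcu _ _ rfl
  have h₁₀ := corner _ (fst_mem_MIRegion hp) (by dsimp only [I2]; linarith)
    (Hc p Prod.fst Prod.snd) 0 (by simp only [condMI, I2, Hc]; ext <;> dsimp only <;> ring)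
  have h₀₁ := corner _ (snd_mem_MIRegion hp) (by dsimp only [I2]; linarith)
    0 (Hc p Prod.snd Prod.fst) (by simp only [condMI, I2, Hc, hYX]; ext <;> dsimp only <;> ring)
  have h₁₁ := corner _ (joint_mem_MIRegion hp) (by dsimp only; linarith)
    (Hc p Prod.fst Prod.snd) (Hc p Prod.snd Prod.fst) (by simp only [condMI, Hc, hYX])
  have h₁₀' := hS.Icc_prod_Icc_subset h₁₀ h₁₁ h₁₀ h₁₁
    (Set.mk_mem_prod (Set.left_mem_Icc.mpr le_rfl) ⟨huB₀, huB⟩)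
  have h₀₁' := hS.Icc_prod_Icc_subset h₀₁ h₀₁ h₁₁ h₁₁
    (Set.mk_mem_prod ⟨huA₀, huA⟩ (Set.left_mem_Icc.mpr le_rfl))
  exact hS.Icc_prod_Icc_subset h₀₀ h₀₁' h₁₀' h₁₁

theorem MIRegion_add_orthant_inter_outerRegion_subset (hp : IsPMF p) :
    (MIRegion p + Set.Iic (0:ℝ) ×ˢ Set.Iic (0:ℝ) ×ˢ Set.Ici (0:ℝ)) ∩ OuterRegion p ⊆
      MIRegion p + { w : ℝ × ℝ × ℝ | ∃ t ≤ (0:ℝ), w = (t, t, t) } := by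
  rintro _ ⟨⟨⟨u₁, u₂, u₃⟩, hu, ⟨k₁, k₂, k₃⟩, ⟨hk₁, hk₂, hk₃⟩, rfl⟩, hv⟩
  obtain ⟨-, -, hI, hA₀, hA, hB₀, hB⟩ := hv
  simp only [Set.mem_Iic, Set.mem_Ici, Prod.mk_add_mk] at hk₁ hk₂ hk₃ hI hA₀ hA hB₀ hB
  obtain ⟨⟨w₁, w₂, w₃⟩, ⟨hw, hwc⟩, hFw⟩ := Icc_prod_Icc_subset_image_condMI hp hI hu
    (by dsimp only; linarith) (Set.mk_mem_prod (a := u₃ + k₃ - (u₂ + k₂))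
      (b := u₃ + k₃ - (u₁ + k₁)) ⟨by dsimp only [condMI]; linarith, hA⟩
      ⟨by dsimp only [condMI]; linarith, hB⟩)
  simp only [condMI, Prod.mk.injEq, Set.mem_ofPred_eq] at hFw hwc
  refine ⟨(w₁, w₂, w₃), hw, _, ⟨u₃ + k₃ - w₃, by linarith, rfl⟩, ?_⟩
  simp only [Prod.mk_add_mk, Prod.mk.injEq]
  exact ⟨by linarith, by linarith, by ring⟩

end Inclusion

/-- the set identity
`(𝓘_{XY} + (−∞,0] × (−∞,0] × [0,∞)) ∩ 𝓘ᵒ_{XY}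
  = (𝓘_{XY} + {(t,t,t) : t ≤ 0}) ∩ ([0,∞) × [0,∞) × ℝ)`,
where `+` is the Minkowski sum. -/
theorem stmt18 {X Y : Type} [Fintype X] [Fintype Y] (p : X × Y → ℝ) (hp : IsPMF p) :
    (MIRegion p + Set.Iic (0:ℝ) ×ˢ Set.Iic (0:ℝ) ×ˢ Set.Ici (0:ℝ)) ∩ OuterRegion p =
      (MIRegion p + { w : ℝ × ℝ × ℝ | ∃ t ≤ (0:ℝ), w = (t, t, t) }) ∩
        (Set.Ici (0:ℝ) ×ˢ Set.Ici (0:ℝ) ×ˢ (Set.univ : Set ℝ)) :=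
  Set.Subset.antisymm
    (fun _ hv => ⟨MIRegion_add_orthant_inter_outerRegion_subset hp hv, hv.2.1, hv.2.2.1, trivial⟩)
    (fun _ hv => ⟨MIRegion_add_diagonal_inter_subset_add_orthant hp hv,
      MIRegion_add_diagonal_inter_subset_outerRegion hv⟩)

end GW
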